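/- Let K be an n-by-n symmetric positive semi-definite matrix, λ > 0, and S an n-by-d matrix such that S^T K S is invertible. Define K_S = K S (S^T K S)^{-1} S^T K. Then K_S is symmetric positive semi-definite, and (K_S + nλ I_n)^{-1} exists; moreover, by the Woodbury identity, K_S (K_S + nλ I_n)^{-1} Y = K S (S^T K^2 S + nλ S^T K S)^{-1} S^T K Y for every Y in R^n. -/

import Mathlib

/-!
`K_S = (K S) (Sᵀ K S)⁻¹ (K S)ᵀ` is a congruence of the positive semidefinite matrix
`(Sᵀ K S)⁻¹`, so `K_S + nλ I` is positive definite; likewise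
`Sᵀ K² S + nλ Sᵀ K S = (K S)ᵀ (K S) + nλ Sᵀ K S` is positive definite because `Sᵀ K S` is
positive semidefinite and invertible. The identity then follows from the push-through relation
`Sᵀ K (K_S + nλ I) = (Sᵀ K² S + nλ Sᵀ K S) (Sᵀ K S)⁻¹ Sᵀ K`.
-/

open Matrix

namespace Matrix

variable {m n R : Type*} [Fintype m] [Fintype n] [DecidableEq m] [DecidableEq n]

theorem mul_inv_mul_mul_add_smul_one_inv [CommRing R] (U : Matrix n m R) (M : Matrix m m R)
    (V : Matrix m n R) (c : R) (hM : IsUnit M) (hW : IsUnit (V * U + c • M))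
    (hP : IsUnit (U * M⁻¹ * V + c • 1)) :
    U * M⁻¹ * V * (U * M⁻¹ * V + c • 1)⁻¹ = U * (V * U + c • M)⁻¹ * V := by
  set P := U * M⁻¹ * V + c • 1
  set W := V * U + c • M
  have push : V * P = W * (M⁻¹ * V) := by
    rw [Matrix.mul_add, Matrix.add_mul, Matrix.smul_mul,
      mul_nonsing_inv_cancel_left M _ ((isUnit_iff_isUnit_det M).mp hM),
      Matrix.mul_smul, Matrix.mul_one, Matrix.mul_assoc, Matrix.mul_assoc]
  calc U * M⁻¹ * V * P⁻¹ = U * W⁻¹ * (W * (M⁻¹ * V)) * P⁻¹ := by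
        simp only [Matrix.mul_assoc,
          nonsing_inv_mul_cancel_left W _ ((isUnit_iff_isUnit_det W).mp hW)]
    _ = U * W⁻¹ * V * P * P⁻¹ := by simp only [← push, Matrix.mul_assoc]
    _ = U * W⁻¹ * V := mul_nonsing_inv_cancel_right P _ ((isUnit_iff_isUnit_det P).mp hP)

omit [DecidableEq n] in
theorem PosSemidef.mul_mul_inv_mul_conjTranspose_mul [CommRing R] [PartialOrder R] [StarRing R]
    {K : Matrix n n R} (hK : K.PosSemidef) (S : Matrix n m R) :
    (K * S * (Sᴴ * K * S)⁻¹ * Sᴴ * K).PosSemidef := by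
  have h := (hK.conjTranspose_mul_mul_same S).inv.mul_mul_conjTranspose_same (K * S)
  rwa [conjTranspose_mul, hK.isHermitian.eq, ← Matrix.mul_assoc] at h

end Matrix

/-- For symmetric PSD `K`, `λ > 0`, and `S` with `SᵀKS` invertible,
`K_S = K S (SᵀKS)⁻¹ Sᵀ K` is symmetric PSD, `K_S + nλI` is invertible, and the
Woodbury identity gives
`K_S (K_S + nλI)⁻¹ Y = K S (SᵀK²S + nλ SᵀKS)⁻¹ Sᵀ K Y` for all `Y`. -/
theorem sketch_woodbury (n d : ℕ) (hn : 0 < n) (lam : ℝ) (hlam : 0 < lam)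
    (K : Matrix (Fin n) (Fin n) ℝ) (hK : K.PosSemidef)
    (S : Matrix (Fin n) (Fin d) ℝ) (hS : IsUnit (Sᵀ * K * S)) :
    (K * S * (Sᵀ * K * S)⁻¹ * Sᵀ * K).PosSemidef
  ∧ IsUnit ((K * S * (Sᵀ * K * S)⁻¹ * Sᵀ * K) +
      ((n : ℝ) * lam) • (1 : Matrix (Fin n) (Fin n) ℝ))
  ∧ ∀ Y : Fin n → ℝ,
      ((K * S * (Sᵀ * K * S)⁻¹ * Sᵀ * K) *
          ((K * S * (Sᵀ * K * S)⁻¹ * Sᵀ * K) +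
            ((n : ℝ) * lam) • (1 : Matrix (Fin n) (Fin n) ℝ))⁻¹).mulVec Y
        = (K * S * (Sᵀ * K * K * S + ((n : ℝ) * lam) • (Sᵀ * K * S))⁻¹ * Sᵀ * K).mulVec Y := by
  have hc : 0 < (n : ℝ) * lam := mul_pos (Nat.cast_pos.mpr hn) hlam
  have hSt : Sᴴ = Sᵀ := conjTranspose_eq_transpose_of_trivial S
  have hKS : (K * S)ᴴ = Sᵀ * K := by rw [conjTranspose_mul, hK.isHermitian.eq, hSt]
  have hNys : (K * S * (Sᵀ * K * S)⁻¹ * Sᵀ * K).PosSemidef :=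
    hSt ▸ hK.mul_mul_inv_mul_conjTranspose_mul S
  have hM : (Sᵀ * K * S).PosDef :=
    (hSt ▸ hK.conjTranspose_mul_mul_same S).posDef_iff_isUnit.mpr hS
  have hP := PosDef.posSemidef_add hNys (PosDef.one.smul hc)
  have hW : (Sᵀ * K * (K * S) + ((n : ℝ) * lam) • (Sᵀ * K * S)).PosDef := by
    simpa only [hKS] using
      PosDef.posSemidef_add (posSemidef_conjTranspose_mul_self (K * S)) (hM.smul hc)
  refine ⟨hNys, hP.isUnit, fun Y => congrArg (· *ᵥ Y) ?_⟩
  simpa only [Matrix.mul_assoc] using mul_inv_mul_mul_add_smul_one_inv (K * S) _ (Sᵀ * K) _ hS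
    hW.isUnit (by simpa only [Matrix.mul_assoc] using hP.isUnit)
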